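/- arXiv:1801.04068 — 2 statements merged into one kernel-verified Lean document; each statement's English description precedes it below -/
import Mathlib

section
/- Let X, Λ, S be mutually independent random variables with X exponentially distributed with rate λ₁, Λ exponentially distributed with rate λ−λ₁ (0 < λ₁ < λ), and S a nonnegative random variable with P(S > 0) > 0. Then for every Borel set E ⊆ [0,∞), the conditional probability P(X ∈ E | X < min(S,Λ)) equals ∫_E λ e^{−λt} P(S > t) dt / (1 − E[e^{−λS}]). In other words, the conditional distribution of X given X < min(S,Λ) has density t ↦ λ e^{−λt} P(S > t)/(1 − E[e^{−λS}]) with respect to Lebesgue measure on [0,∞). -/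
/-!
By independence, `P(X ∈ E, X < min(S, Λ)) = ∫_E P(S > t) P(Λ > t) dP_X(t)`. The tail
`P(Λ > t) = e^{-(λ-λ₁)t}` tilts the law `Exp(λ₁)` of `X` into `(λ₁/λ) Exp(λ)`, so the numerator
and the denominator (`E = ℝ`) are `λ₁/λ` times `∫_E P(S > t) λe^{-λt} dt`. By the
layer-cake formula, `∫_0^∞ P(S > t) λe^{-λt} dt = E[1 - e^{-λS}]`, and the factor `λ₁/λ` cancels.
-/
open MeasureTheory ProbabilityTheory Real Set
open scoped ENNReal

lemma measurable_measure_setOf_lt {Ω : Type*} [MeasurableSpace Ω] (μ : Measure Ω) (S : Ω → ℝ) :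
    Measurable fun t : ℝ => μ {ω | t < S ω} :=
  Antitone.measurable fun _ _ hst => measure_mono fun _ hω => hst.trans_lt hω

lemma exp_neg_mul_le_one {l s : ℝ} (hl : 0 ≤ l) (hs : 0 ≤ s) : exp (-(l * s)) ≤ 1 :=
  exp_le_one_iff.mpr (neg_nonpos.mpr (mul_nonneg hl hs))

namespace ProbabilityTheory

lemma expMeasure_eq_withDensity (r : ℝ) :
    expMeasure r = volume.withDensity (exponentialPDF r) := rfl

lemma measurable_exponentialPDF (r : ℝ) : Measurable (exponentialPDF r) :=
  (measurable_exponentialPDFReal r).ennreal_ofReal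

lemma expMeasure_Ioi {r x : ℝ} (hr : 0 < r) (hx : 0 ≤ x) :
    expMeasure r (Ioi x) = ENNReal.ofReal (exp (-(r * x))) := by
  have := isProbabilityMeasure_expMeasure hr
  have hcdf := cdf_expMeasure_eq hr x
  rw [cdf_eq_real, if_pos hx, measureReal_def] at hcdf
  have hexp := exp_neg_mul_le_one hr.le hx
  rw [← compl_Iic, prob_compl_eq_one_sub measurableSet_Iic,
    ← ENNReal.ofReal_toReal (measure_ne_top _ (Iic x)), hcdf, ← ENNReal.ofReal_one,
    ← ENNReal.ofReal_sub _ (by linarith)]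
  ring_nf

lemma ae_pos_expMeasure (r : ℝ) : ∀ᵐ x ∂expMeasure r, 0 < x := by
  rw [expMeasure_eq_withDensity, ae_withDensity_iff (measurable_exponentialPDF r)]
  filter_upwards [Measure.ae_ne volume 0] with x hx0 hpdf
  by_contra! hx
  exact hpdf (exponentialPDF_of_neg (lt_of_le_of_ne hx hx0))

lemma expMeasure_withDensity_exp {r l : ℝ} (hr : 0 ≤ r) (hl : 0 < l) :
    (expMeasure r).withDensity (fun x => ENNReal.ofReal (exp (-((l - r) * x))))
      = ENNReal.ofReal (r / l) • expMeasure l := by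
  rw [expMeasure_eq_withDensity, ← withDensity_mul _ (measurable_exponentialPDF r) (by fun_prop),
    expMeasure_eq_withDensity, ← withDensity_smul _ (measurable_exponentialPDF l)]
  congr 1
  ext x
  simp only [Pi.mul_apply, Pi.smul_apply, smul_eq_mul]
  rcases lt_or_ge x 0 with hx | hx
  · simp [exponentialPDF_of_neg hx]
  · rw [exponentialPDF_of_nonneg hx, exponentialPDF_of_nonneg hx,
      ← ENNReal.ofReal_mul (by positivity), ← ENNReal.ofReal_mul (by positivity), mul_assoc,
      ← exp_add]
    congr 1
    field_simp
    ring_nf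

variable {Ω : Type*} [MeasurableSpace Ω] {μ : Measure Ω}

lemma measure_lt_min_of_indepFun {S Λ : Ω → ℝ} (hSΛ : IndepFun S Λ μ) (t : ℝ) :
    μ {ω | t < min (S ω) (Λ ω)} = μ {ω | t < S ω} * μ {ω | t < Λ ω} := by
  simp_rw [lt_min_iff]
  exact hSΛ.measure_inter_preimage_eq_mul _ _ measurableSet_Ioi measurableSet_Ioi

lemma measure_mem_and_lt_of_indepFun [IsFiniteMeasure μ] {X T : Ω → ℝ} (hX : Measurable X)
    (hT : Measurable T) (hXT : IndepFun X T μ) {F : Set ℝ} (hF : MeasurableSet F) :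
    μ {ω | X ω ∈ F ∧ X ω < T ω} = ∫⁻ x in F, μ {ω | x < T ω} ∂μ.map X := by
  have hs : MeasurableSet {p : ℝ × ℝ | p.1 ∈ F ∧ p.1 < p.2} :=
    (hF.preimage measurable_fst).inter (measurableSet_lt measurable_fst measurable_snd)
  have hmap := (indepFun_iff_map_prod_eq_prod_map_map hX.aemeasurable hT.aemeasurable).mp hXT
  rw [← lintegral_indicator hF]
  have hslice (x : ℝ) : μ.map T (Prod.mk x ⁻¹' {p : ℝ × ℝ | p.1 ∈ F ∧ p.1 < p.2})
      = F.indicator (fun x => μ {ω | x < T ω}) x := by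
    by_cases hx : x ∈ F
    · rw [indicator_of_mem hx, show μ {ω | x < T ω} = μ (T ⁻¹' Ioi x) from rfl,
        ← Measure.map_apply hT measurableSet_Ioi]
      congr 1
      ext
      simp [hx]
    · simp [hx]
  rw [← funext hslice, ← Measure.prod_apply hs, ← hmap, Measure.map_apply (hX.prodMk hT) hs]
  rfl

lemma lintegral_measure_lt_expMeasure [IsProbabilityMeasure μ] {S : Ω → ℝ} (hS : Measurable S)
    (hS0 : 0 ≤ᵐ[μ] S) {l : ℝ} (hl : 0 < l) :
    ∫⁻ t, μ {ω | t < S ω} ∂expMeasure l = ENNReal.ofReal (1 - ∫ ω, exp (-(l * S ω)) ∂μ) := by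
  have hint : Integrable (fun ω => exp (-(l * S ω))) μ := by
    refine (integrable_const 1).mono' (by fun_prop) ?_
    filter_upwards [hS0] with ω hω
    rw [norm_of_nonneg (exp_pos _).le]
    exact exp_neg_mul_le_one hl.le hω
  have hlayer := lintegral_comp_eq_lintegral_meas_lt_mul μ hS0 hS.aemeasurable
    (g := fun t => l * exp (-(l * t)))
    (fun _ _ => (by fun_prop : Continuous _).intervalIntegrable _ _)
    (ae_of_all _ fun _ => by positivity)
  have hprim (s : ℝ) : ∫ t in (0 : ℝ)..s, l * exp (-(l * t)) = 1 - exp (-(l * s)) := by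
    rw [intervalIntegral.integral_eq_sub_of_hasDerivAt (fun _ _ => hasDerivAt_neg_exp_mul_exp)
      ((by fun_prop : Continuous _).intervalIntegrable _ _)]
    simp only [mul_zero, neg_zero, exp_zero]
    ring
  calc ∫⁻ t, μ {ω | t < S ω} ∂expMeasure l
      = ∫⁻ t in Ioi 0, μ {ω | t < S ω} ∂expMeasure l := by
        rw [Measure.restrict_eq_self_of_ae_mem (s := Ioi 0) (ae_pos_expMeasure l)]
    _ = ∫⁻ t in Ioi 0, μ {ω | t < S ω} * ENNReal.ofReal (l * exp (-(l * t))) := by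
        rw [expMeasure_eq_withDensity, setLIntegral_withDensity_eq_setLIntegral_mul _
          (measurable_exponentialPDF l) (measurable_measure_setOf_lt μ S) measurableSet_Ioi]
        refine setLIntegral_congr_fun measurableSet_Ioi fun t ht => ?_
        rw [Pi.mul_apply, exponentialPDF_of_nonneg (le_of_lt ht), mul_comm]
    _ = ∫⁻ ω, ENNReal.ofReal (1 - exp (-(l * S ω))) ∂μ := by simp_rw [← hlayer, hprim]
    _ = ENNReal.ofReal (1 - ∫ ω, exp (-(l * S ω)) ∂μ) := by
        have hint' : Integrable (fun ω => 1 - exp (-(l * S ω))) μ := (integrable_const 1).sub hint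
        rw [← ofReal_integral_eq_lintegral_ofReal hint'
          (hS0.mono fun _ hω => sub_nonneg.mpr (exp_neg_mul_le_one hl.le hω)),
          integral_sub (integrable_const 1) hint]
        simp

lemma integral_exp_neg_mul_le_one [IsProbabilityMeasure μ] {S : Ω → ℝ} (hS0 : 0 ≤ᵐ[μ] S)
    {l : ℝ} (hl : 0 ≤ l) : ∫ ω, exp (-(l * S ω)) ∂μ ≤ 1 := by
  simpa using integral_mono_of_nonneg (ae_of_all _ fun _ => (exp_pos _).le) (integrable_const 1)
    (hS0.mono fun _ hω => exp_neg_mul_le_one hl hω)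

lemma toReal_setLIntegral_expMeasure {l : ℝ} (hl : 0 < l) {E : Set ℝ} (hE : MeasurableSet E)
    (hE0 : E ⊆ Ici 0) {g : ℝ → ℝ≥0∞} (hg : Measurable g) (hg_top : ∀ t, g t ≠ ⊤) :
    (∫⁻ t in E, g t ∂expMeasure l).toReal = ∫ t in E, l * exp (-(l * t)) * (g t).toReal := by
  rw [integral_eq_lintegral_of_nonneg_ae (ae_of_all _ fun t => by positivity)
    (by fun_prop), expMeasure_eq_withDensity,
    setLIntegral_withDensity_eq_setLIntegral_mul _ (measurable_exponentialPDF l) hg hE]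
  congr 1
  refine setLIntegral_congr_fun hE fun t ht => ?_
  rw [Pi.mul_apply, exponentialPDF_of_nonneg (hE0 ht),
    ENNReal.ofReal_mul (p := l * exp (-(l * t))) (by positivity), ENNReal.ofReal_toReal (hg_top t)]

lemma measure_mem_and_lt_min_of_expMeasure [IsFiniteMeasure μ] {X Λ S : Ω → ℝ}
    (hX : Measurable X) (hΛ : Measurable Λ) (hS : Measurable S) {l₁ l : ℝ} (hl₁ : 0 ≤ l₁)
    (hl : l₁ < l) (hXlaw : μ.map X = expMeasure l₁) (hΛlaw : μ.map Λ = expMeasure (l - l₁))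
    (hXT : IndepFun X (fun ω => min (S ω) (Λ ω)) μ) (hSΛ : IndepFun S Λ μ) {F : Set ℝ}
    (hF : MeasurableSet F) :
    μ {ω | X ω ∈ F ∧ X ω < min (S ω) (Λ ω)}
      = ENNReal.ofReal (l₁ / l) * ∫⁻ t in F, μ {ω | t < S ω} ∂expMeasure l := by
  have hΛtail (t : ℝ) (ht : 0 ≤ t) : μ {ω | t < Λ ω} = ENNReal.ofReal (exp (-((l - l₁) * t))) := by
    rw [← expMeasure_Ioi (sub_pos.mpr hl) ht, ← hΛlaw, Measure.map_apply hΛ measurableSet_Ioi]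
    rfl
  rw [measure_mem_and_lt_of_indepFun hX (hS.min hΛ) hXT hF, hXlaw]
  calc ∫⁻ t in F, μ {ω | t < min (S ω) (Λ ω)} ∂expMeasure l₁
      = ∫⁻ t in F, (ENNReal.ofReal (exp (-((l - l₁) * t))) * μ {ω | t < S ω}) ∂expMeasure l₁ := by
        refine setLIntegral_congr_fun_ae hF ?_
        filter_upwards [ae_pos_expMeasure l₁] with t ht _
        rw [measure_lt_min_of_indepFun hSΛ, hΛtail t ht.le, mul_comm]
    _ = ∫⁻ t in F, μ {ω | t < S ω}
          ∂(expMeasure l₁).withDensity fun t => ENNReal.ofReal (exp (-((l - l₁) * t))) :=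
        (setLIntegral_withDensity_eq_setLIntegral_mul _ (by fun_prop)
          (measurable_measure_setOf_lt μ S) hF).symm
    _ = ENNReal.ofReal (l₁ / l) * ∫⁻ t in F, μ {ω | t < S ω} ∂expMeasure l := by
        rw [expMeasure_withDensity_exp hl₁ (hl₁.trans_lt hl), Measure.restrict_smul,
          lintegral_smul_measure, smul_eq_mul]

end ProbabilityTheory

theorem stmt_3_general {Ω : Type*} [MeasurableSpace Ω] (μ : Measure Ω) [IsProbabilityMeasure μ]
    (X Λ S : Ω → ℝ) (hXm : Measurable X) (hΛm : Measurable Λ) (hSm : Measurable S)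
    (hSnn : ∀ᵐ ω ∂μ, 0 ≤ S ω)
    (l l1 : ℝ) (hl1 : 0 < l1) (hl : l1 < l)
    (hX : Measure.map X μ = expMeasure l1)
    (hΛ : Measure.map Λ μ = expMeasure (l - l1))
    (hInd : iIndepFun (m := fun _ : Fin 3 => (inferInstance : MeasurableSpace ℝ)) ![X, Λ, S] μ) :
    ∀ E : Set ℝ, MeasurableSet E → E ⊆ Set.Ici 0 →
      (μ {ω | X ω ∈ E ∧ X ω < min (S ω) (Λ ω)}).toReal
          / (μ {ω | X ω < min (S ω) (Λ ω)}).toReal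
        = (∫ t in E, l * Real.exp (-l * t) * (μ {ω | t < S ω}).toReal)
          / (1 - ∫ ω, Real.exp (-l * S ω) ∂μ) := by
  intro E hE hE0
  have hl0 : 0 < l := hl1.trans hl
  have hmeas : ∀ i, Measurable (![X, Λ, S] i) := fun i => by fin_cases i <;> assumption
  have hSΛ : IndepFun S Λ μ := by simpa using hInd.indepFun (show (2 : Fin 3) ≠ 1 by decide)
  have hXT : IndepFun X (fun ω => min (S ω) (Λ ω)) μ :=
    ((hInd.indepFun_prodMk hmeas 2 1 0 (by decide) (by decide)).comp
      (measurable_fst.min measurable_snd) measurable_id).symm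
  have hlaw (F : Set ℝ) (hF : MeasurableSet F) :=
    measure_mem_and_lt_min_of_expMeasure hXm hΛm hSm hl1.le hl hX hΛ hXT hSΛ hF
  have hden := hlaw univ MeasurableSet.univ
  simp only [mem_univ, true_and, Measure.restrict_univ] at hden
  simp only [neg_mul]
  rw [hlaw E hE, hden, lintegral_measure_lt_expMeasure hSm hSnn hl0,
    ← toReal_setLIntegral_expMeasure hl0 hE hE0 (measurable_measure_setOf_lt μ S)
      (fun _ => measure_ne_top _ _), ENNReal.toReal_mul, ENNReal.toReal_mul,
    ENNReal.toReal_ofReal (sub_nonneg.mpr (integral_exp_neg_mul_le_one hSnn hl0.le)),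
    ENNReal.toReal_ofReal (div_pos hl1 hl0).le]
  exact mul_div_mul_left _ _ (div_pos hl1 hl0).ne'

/-- The conditional distribution of `X` given `{X < min(S, Λ)}` has density
`t ↦ λ e^{-λ t} P(S > t) / (1 - E[e^{-λ S}])` on `[0, ∞)`: for every Borel set
`E ⊆ [0, ∞)`, `P(X ∈ E | X < min(S, Λ)) = (∫_E λ e^{-λ t} P(S > t) dt) / (1 - E[e^{-λ S}])`. -/
theorem stmt_3 {Ω : Type*} [MeasurableSpace Ω] (μ : Measure Ω) [IsProbabilityMeasure μ]
    (X Λ S : Ω → ℝ) (hXm : Measurable X) (hΛm : Measurable Λ) (hSm : Measurable S)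
    (hSnn : ∀ᵐ ω ∂μ, 0 ≤ S ω) (hSpos : 0 < μ {ω | 0 < S ω})
    (l l1 : ℝ) (hl1 : 0 < l1) (hl : l1 < l)
    (hX : Measure.map X μ = expMeasure l1)
    (hΛ : Measure.map Λ μ = expMeasure (l - l1))
    (hInd : iIndepFun (m := fun _ : Fin 3 => (inferInstance : MeasurableSpace ℝ)) ![X, Λ, S] μ) :
    ∀ E : Set ℝ, MeasurableSet E → E ⊆ Set.Ici 0 →
      (μ {ω | X ω ∈ E ∧ X ω < min (S ω) (Λ ω)}).toReal
          / (μ {ω | X ω < min (S ω) (Λ ω)}).toReal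
        = (∫ t in E, l * Real.exp (-l * t) * (μ {ω | t < S ω}).toReal)
          / (1 - ∫ ω, Real.exp (-l * S ω) ∂μ) :=
  stmt_3_general μ X Λ S hXm hΛm hSm hSnn l l1 hl1 hl hX hΛ hInd
end

section
/- (First two moments of the interdeparture time.) Let S be a nonnegative random variable, let 0 < λ₁ ≤ λ, write P(x) := E[e^{−xS}] for x > 0, and assume P(λ) > 0. Define φ(s) := λ₁ P(λ−s) / (λ₁ P(λ−s) − s) for s in a neighborhood of 0 (the denominator is nonzero near s = 0 since λ₁P(λ) > 0). Then φ is twice differentiable at 0 with φ(0) = 1, φ′(0) = 1/(λ₁ P(λ)), and φ″(0) = 2/(λ₁² P(λ)²) − 2 E[S e^{−λS}]/(λ₁ P(λ)²). In particular, if Y is a random variable whose moment generating function equals φ near 0, then E[Y] = 1/(λ₁P(λ)) and E[Y²] = 2(1/(λ₁²P(λ)²) − E[Se^{−λS}]/(λ₁P(λ)²)). -/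
/-!
Write `N s = λ₁ P(λ - s) = λ₁ mgf S (s - λ)`, so that `φ = N / (N - id)`. Since `S ≥ 0`, the mgf
of `S` is finite, hence analytic, on `(-∞, 0)`, and `N` is analytic at `0` as `λ > 0`.
Differentiating the quotient twice gives `φ'(0) = 1 / N(0)` and `φ''(0) = 2 (1 - N'(0)) / N(0)²`,
with `N(0) = λ₁ P(λ)` and `N'(0) = λ₁ E[S e^{-λS}]`. If the mgf of `Y` agrees with `φ` near `0`,
it is nonzero there, so it is finite on a neighbourhood of `0` and its derivatives at `0` are the
moments of `Y`.
-/

open MeasureTheory ProbabilityTheory Real Filter Topology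

namespace ProbabilityTheory

variable {Ω : Type*} [MeasurableSpace Ω] {μ : Measure Ω} {X : Ω → ℝ}

lemma Iio_subset_interior_integrableExpSet [IsFiniteMeasure μ] (hX : AEMeasurable X μ)
    (hX0 : 0 ≤ᵐ[μ] X) : Set.Iio 0 ⊆ interior (integrableExpSet X μ) := by
  refine interior_maximal (fun t (ht : t < 0) => ?_) isOpen_Iio
  refine Integrable.mono' (integrable_const 1)
    (measurable_exp.comp_aemeasurable (hX.const_mul t)).aestronglyMeasurable ?_
  filter_upwards [hX0] with ω hω
  rw [norm_of_nonneg (exp_pos _).le, exp_le_one_iff]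
  exact mul_nonpos_of_nonpos_of_nonneg ht.le hω

lemma zero_mem_interior_integrableExpSet_of_eventually_mgf_ne_zero
    (h : ∀ᶠ t in 𝓝 0, mgf X μ t ≠ 0) : 0 ∈ interior (integrableExpSet X μ) :=
  mem_interior_iff_mem_nhds.2 (h.mono fun _ ht => not_not.1 (mt mgf_undef ht))

lemma moment_eq_iteratedDeriv_of_mgf_eventuallyEq {f : ℝ → ℝ} (h : mgf X μ =ᶠ[𝓝 0] f)
    (hf : ∀ᶠ t in 𝓝 0, f t ≠ 0) (n : ℕ) : μ[X ^ n] = iteratedDeriv n f 0 := by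
  have hX : ∀ᶠ t in 𝓝 0, mgf X μ t ≠ 0 := by
    filter_upwards [h, hf] with t ht hft
    rwa [ht]
  rw [← iteratedDeriv_mgf_zero (zero_mem_interior_integrableExpSet_of_eventually_mgf_ne_zero hX),
    h.iteratedDeriv_eq]

end ProbabilityTheory

section DivSubSelf

variable {N : ℝ → ℝ}

lemma hasDerivAt_div_sub_self {s N' : ℝ} (hN : HasDerivAt N N' s) (hs : N s - s ≠ 0) :
    HasDerivAt (fun t => N t / (N t - t)) ((N s - s * N') / (N s - s) ^ 2) s := by
  refine (hN.fun_div (hN.fun_sub (hasDerivAt_id' s)) hs).congr_deriv ?_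
  ring

lemma hasDerivAt_div_sub_self_zero (hN : DifferentiableAt ℝ N 0) (h0 : N 0 ≠ 0) :
    HasDerivAt (fun s => N s / (N s - s)) (N 0)⁻¹ 0 := by
  refine (hasDerivAt_div_sub_self hN.hasDerivAt (by simpa using h0)).congr_deriv ?_
  field_simp
  ring

lemma hasDerivAt_deriv_div_sub_self (hN : ∀ᶠ s in 𝓝 0, DifferentiableAt ℝ N s)
    (hN' : DifferentiableAt ℝ (deriv N) 0) (h0 : N 0 ≠ 0) :
    HasDerivAt (deriv fun s => N s / (N s - s)) (2 * (1 - deriv N 0) / N 0 ^ 2) 0 := by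
  have hN0 : HasDerivAt N (deriv N 0) 0 := hN.self_of_nhds.hasDerivAt
  have hden : ∀ᶠ s in 𝓝 0, N s - s ≠ 0 :=
    (hN0.continuousAt.sub continuousAt_id).eventually_ne (by simpa using h0)
  have hderiv : deriv (fun s => N s / (N s - s))
      =ᶠ[𝓝 0] fun s => (N s - s * deriv N s) / (N s - s) ^ 2 := by
    filter_upwards [hN, hden] with s hs hs'
    exact (hasDerivAt_div_sub_self hs.hasDerivAt hs').deriv
  rw [hderiv.hasDerivAt_iff]
  have hnum := hN0.fun_sub ((hasDerivAt_id' 0).fun_mul hN'.hasDerivAt)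
  have hsq := (hN0.fun_sub (hasDerivAt_id' 0)).fun_pow 2
  refine (hnum.fun_div hsq (by simpa using h0)).congr_deriv ?_
  field_simp
  ring

end DivSubSelf

/-- First two moments of the interdeparture time: the function
`φ(s) = λ₁ P(λ-s) / (λ₁ P(λ-s) - s)` (with `P` the Laplace transform of the service time `S`)
satisfies `φ(0) = 1`, `φ'(0) = 1/(λ₁ P(λ))` and
`φ''(0) = 2/(λ₁² P(λ)²) - 2 E[S e^{-λ S}]/(λ₁ P(λ)²)`; in particular any random variable `Y`
whose MGF agrees with `φ` near `0` has these as its first two moments. -/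
theorem stmt_14 {Ω : Type*} [MeasurableSpace Ω] (μ : Measure Ω) [IsProbabilityMeasure μ]
    (S : Ω → ℝ) (hSm : Measurable S) (hSnn : ∀ᵐ ω ∂μ, 0 ≤ S ω)
    (l l1 : ℝ) (hl1 : 0 < l1) (hll : l1 ≤ l)
    (P : ℝ → ℝ) (hP : ∀ x : ℝ, P x = ∫ ω, Real.exp (-x * S ω) ∂μ)
    (hp : 0 < P l)
    (φ : ℝ → ℝ) (hφ : ∀ s : ℝ, φ s = l1 * P (l - s) / (l1 * P (l - s) - s)) :
    φ 0 = 1 ∧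
    HasDerivAt φ (1 / (l1 * P l)) 0 ∧
    HasDerivAt (deriv φ)
      (2 / (l1 ^ 2 * P l ^ 2)
        - 2 * (∫ ω, S ω * Real.exp (-l * S ω) ∂μ) / (l1 * P l ^ 2)) 0 ∧
    ∀ Y : Ω → ℝ, (∀ᶠ s in nhds (0 : ℝ), mgf Y μ s = φ s) →
      (∫ ω, Y ω ∂μ) = 1 / (l1 * P l) ∧
      (∫ ω, (Y ω) ^ 2 ∂μ)
        = 2 * (1 / (l1 ^ 2 * P l ^ 2)
          - (∫ ω, S ω * Real.exp (-l * S ω) ∂μ) / (l1 * P l ^ 2)) := by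
  set N : ℝ → ℝ := fun s => l1 * mgf S μ (s - l)
  set Q := ∫ ω, S ω * exp (-l * S ω) ∂μ
  have hφN : φ = fun s => N s / (N s - s) := by
    funext s
    simp only [hφ, hP, N, mgf, neg_sub]
  have hmem : 0 - l ∈ interior (integrableExpSet S μ) :=
    Iio_subset_interior_integrableExpSet hSm.aemeasurable hSnn (Set.mem_Iio.2 (by linarith))
  have hNan : AnalyticAt ℝ N 0 :=
    analyticAt_const.fun_mul (by simpa using (analyticAt_mgf (hmem)).comp_sub l)
  have hN0 : N 0 = l1 * P l := by simp [N, hP, mgf]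
  have hN'0 : deriv N 0 = l1 * Q := by
    have hderiv : HasDerivAt N (l1 * μ[fun ω => S ω * exp ((0 - l) * S ω)]) 0 :=
      ((hasDerivAt_mgf (hmem)).comp_sub_const 0 l).const_mul l1
    simp [hderiv.deriv, Q]
  have hN0ne : N 0 ≠ 0 := by rw [hN0]; positivity
  have hφ0 : φ 0 = 1 := by simp [hφN, hN0ne]
  have hφ' : HasDerivAt φ (1 / (l1 * P l)) 0 := by
    simpa [hφN, hN0] using hasDerivAt_div_sub_self_zero hNan.differentiableAt hN0ne
  have hφ'' : HasDerivAt (deriv φ) (2 / (l1 ^ 2 * P l ^ 2) - 2 * Q / (l1 * P l ^ 2)) 0 := by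
    have := hasDerivAt_deriv_div_sub_self
      (hNan.eventually_analyticAt.mono fun _ h => h.differentiableAt)
      hNan.deriv.differentiableAt hN0ne
    rw [← hφN, hN0, hN'0] at this
    convert this using 1
    field_simp
  refine ⟨hφ0, hφ', hφ'', fun Y hY => ?_⟩
  have hne : ∀ᶠ t in 𝓝 0, φ t ≠ 0 := hφ'.continuousAt.eventually_ne (by simp [hφ0])
  have h1 := moment_eq_iteratedDeriv_of_mgf_eventuallyEq hY hne 1
  have h2 := moment_eq_iteratedDeriv_of_mgf_eventuallyEq hY hne 2
  rw [iteratedDeriv_one, hφ'.deriv, pow_one] at h1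
  rw [iteratedDeriv_succ, iteratedDeriv_one, hφ''.deriv] at h2
  refine ⟨h1, ?_⟩
  simp only [Pi.pow_apply] at h2
  rw [h2]
  ring
end
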